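/- arXiv:2601.21756 — 6 statements merged into one kernel-verified Lean document; each statement's English description precedes it below -/
import Mathlib

section
/- Let q = 3^d with d odd and b ∈ F_q with Tr(b) = 0, where Tr is the trace to F_3. Then the elliptic curve E: y^2 = x^3 - x + b over F_q satisfies #E(F_q) = q + 1. -/
open Module

lemma artin_schreier_three (d : ℕ) (F : Type) [Field F] [Fintype F] [Algebra (ZMod 3) F]
    (hF : Fintype.card F = 3 ^ d) (b : F)
    (hb : Algebra.trace (ZMod 3) F b = 0) : ∃ c : F, c ^ 3 - c = b := by
  have hp : Fact (Nat.Prime 3) := ⟨by norm_num⟩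
  have hinj : Function.Injective (algebraMap (ZMod 3) F) := (algebraMap (ZMod 3) F).injective
  have hchar : CharP F 3 := charP_of_injective_algebraMap hinj 3
  have hfr : ∀ r : ZMod 3, (algebraMap (ZMod 3) F r) ^ 3 = algebraMap (ZMod 3) F r := by
    intro r; rw [← map_pow, ZMod.pow_card]
  let φ : F →ₐ[ZMod 3] F := { frobenius F 3 with commutes' := hfr }
  have hφ : ∀ x : F, φ x = x ^ 3 := fun x => rfl
  have hbij : Function.Bijective φ :=
    Finite.injective_iff_bijective.mp (frobenius_inj F 3)
  let e : F ≃ₐ[ZMod 3] F := AlgEquiv.ofBijective φ hbij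
  have htr : ∀ x : F, Algebra.trace (ZMod 3) F (x ^ 3) = Algebra.trace (ZMod 3) F x := by
    intro x
    have := Algebra.trace_eq_of_algEquiv e x
    rwa [show e x = x ^ 3 from hφ x] at this
  let L : F →ₗ[ZMod 3] F := e.toLinearMap - LinearMap.id
  have hL : ∀ x : F, L x = x ^ 3 - x := by
    intro x
    simp only [L, LinearMap.sub_apply, LinearMap.id_apply, AlgEquiv.toLinearMap_apply]
    rw [show e x = x ^ 3 from hφ x]
  have hkerL : LinearMap.ker L = LinearMap.range (Algebra.linearMap (ZMod 3) F) := by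
    ext x
    simp only [LinearMap.mem_ker, LinearMap.mem_range, hL, Algebra.linearMap_apply]
    constructor
    · intro h
      have h3 : x * ((x - 1) * (x + 1)) = 0 := by ring_nf; linear_combination h
      rcases mul_eq_zero.mp h3 with h0 | h1
      · exact ⟨0, by simp [h0]⟩
      · rcases mul_eq_zero.mp h1 with h2 | h2
        · exact ⟨1, by simp [sub_eq_zero.mp h2]⟩
        · exact ⟨-1, by rw [map_neg, map_one]; linear_combination -h2⟩
    · rintro ⟨r, rfl⟩
      rw [hfr r]; ring
  have hd3 : finrank (ZMod 3) F = d := by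
    have h := card_eq_pow_finrank (K := ZMod 3) (V := F)
    rw [hF, ZMod.card] at h
    exact (Nat.pow_right_injective (by norm_num) h.symm)
  have hle : LinearMap.range L ≤ LinearMap.ker (Algebra.trace (ZMod 3) F) := by
    rintro _ ⟨x, rfl⟩
    simp only [LinearMap.mem_ker, hL, map_sub, htr, sub_self]
  have h1 := LinearMap.finrank_range_add_finrank_ker L
  have h2 := LinearMap.finrank_range_add_finrank_ker (Algebra.trace (ZMod 3) F)
  have hkL1 : finrank (ZMod 3) (LinearMap.ker L) = 1 := by
    rw [hkerL, LinearMap.finrank_range_of_inj hinj, finrank_self]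
  have hrT : LinearMap.range (Algebra.trace (ZMod 3) F : F →ₗ[ZMod 3] ZMod 3) = ⊤ :=
    LinearMap.range_eq_top.mpr (Algebra.trace_surjective (ZMod 3) F)
  have hrT1 : finrank (ZMod 3) (LinearMap.range (Algebra.trace (ZMod 3) F : F →ₗ[ZMod 3] ZMod 3)) = 1 := by
    rw [hrT, finrank_top, finrank_self]
  have heq : LinearMap.range L = LinearMap.ker (Algebra.trace (ZMod 3) F) := by
    apply Submodule.eq_of_le_of_finrank_eq hle
    omega
  have hbmem : b ∈ LinearMap.range L := heq ▸ (LinearMap.mem_ker.mpr hb)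
  obtain ⟨c, hc⟩ := hbmem
  exact ⟨c, by rw [← hL c, hc]⟩

theorem point_count_typeI_trace_zero_odd
    (d : ℕ) (hd : Odd d) (F : Type) [Field F] [Fintype F] [Algebra (ZMod 3) F]
    (hF : Fintype.card F = 3 ^ d) (b : F)
    (hb : Algebra.trace (ZMod 3) F b = 0) :
    Nat.card {p : F × F // p.2 ^ 2 = p.1 ^ 3 - p.1 + b} + 1 = 3 ^ d + 1 := by
  classical
  have hp : Fact (Nat.Prime 3) := ⟨by norm_num⟩
  have hchar : CharP F 3 := charP_of_injective_algebraMap (algebraMap (ZMod 3) F).injective 3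
  obtain ⟨c, hc⟩ := artin_schreier_three d F hF b hb
  have hrc : ringChar F = 3 := ringChar.eq F 3
  have hrc2 : ringChar F ≠ 2 := by rw [hrc]; norm_num
  have hcard4 : Fintype.card F % 4 = 3 := by
    rw [hF]; obtain ⟨k, rfl⟩ := hd
    rw [pow_succ, pow_mul, Nat.mul_mod, Nat.pow_mod]
    norm_num
  have hns : ¬ IsSquare (-1 : F) := by
    rw [FiniteField.isSquare_neg_one_iff]
    omega
  have hchi_neg1 : quadraticChar F (-1) = -1 :=
    quadraticChar_neg_one_iff_not_isSquare.mpr hns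
  have hq : ∀ s : F, (Fintype.card {y : F // y ^ 2 = s} : ℤ) = quadraticChar F s + 1 := by
    intro s
    rw [← quadraticChar_card_sqrts hrc2 s]
    norm_cast
    rw [Set.toFinset_card]
    exact Fintype.card_congr (Equiv.subtypeEquivRight fun x => by simp)
  have key : ∀ t : F,
      Fintype.card {y : F // y ^ 2 = t} + Fintype.card {y : F // y ^ 2 = -t} = 2 := by
    intro t
    have hneg : quadraticChar F (-t) = - quadraticChar F t := by
      rw [show (-t : F) = -1 * t by ring, map_mul, hchi_neg1]; ring
    have h : (Fintype.card {y : F // y ^ 2 = t} + Fintype.card {y : F // y ^ 2 = -t} : ℤ) = 2 := by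
      rw [hq t, hq (-t), hneg]; ring
    exact_mod_cast h
  set f : F → F := fun x => x ^ 3 - x + b with hf
  set N : F → ℕ := fun t => Fintype.card {y : F // y ^ 2 = t} with hN
  have hcount : Nat.card {p : F × F // p.2 ^ 2 = p.1 ^ 3 - p.1 + b} = ∑ x : F, N (f x) := by
    rw [Nat.card_eq_fintype_card]
    rw [Fintype.card_congr ((Equiv.subtypeProdEquivSigmaSubtype
      (fun (x : F) (y : F) => y ^ 2 = x ^ 3 - x + b)).trans (Equiv.refl _))]
    rw [Fintype.card_sigma]
  have hinv : ∀ x : F, f (c - x) = -(f x) := by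
    intro x
    have h3 : (c - x) ^ 3 = c ^ 3 - x ^ 3 := sub_pow_char (x := c) (y := x)
    have hb3 : (3 : F) = 0 := CharP.cast_eq_zero F 3
    simp only [hf]
    rw [h3]
    linear_combination hc + b * hb3
  have hre : ∑ x : F, N (-(f x)) = ∑ x : F, N (f x) := by
    rw [← Equiv.sum_comp (Equiv.subLeft c) (fun x => N (f x))]
    apply Finset.sum_congr rfl
    intro x _
    rw [show (Equiv.subLeft c) x = c - x from rfl, hinv x]
  have hsum : ∑ x : F, N (f x) + ∑ x : F, N (-(f x)) = 2 * Fintype.card F := by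
    rw [← Finset.sum_add_distrib]
    rw [Finset.sum_congr rfl (fun x _ => key (f x))]
    simp [Finset.sum_const, mul_comm]
  rw [hre] at hsum
  have : ∑ x : F, N (f x) = Fintype.card F := by omega
  rw [hcount, this, hF]
end

section
/- Let q = 3^d with d even and b ∈ F_q with Tr(b) = 0. Then the elliptic curve E: y^2 = x^3 - x + b over F_q satisfies #E(F_q) = q + 1 - (-1)^(d/2)·2·3^(d/2). -/
/-!
Write `q = 3 ^ e`, `χ` for the quadratic character of `F` and `T z = z + z ^ q` for the trace of
`F` over its subfield `K` of order `q`. As `Tr b = 0`, `b = c ^ 3 - c`, and `x ↦ x ^ 3 - x` is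
3-to-1 onto the kernel `V` of `Tr`, so there are `q ^ 2 + 3 ∑_{t ∈ V} χ t` affine points.

On `ker T = {z | z ^ q = -z}` the character `χ` is the constant `ε = (-1) ^ ((q + 1) / 2)` away
from `0`, while the elements of `Kˣ` are squares in `F`. Scaling by them permutes the nonzero
fibres of `T`, so each of these has `χ`-sum `-ε`, because `∑ χ = 0`. Since `Tr ∘ T = 2 Tr`, `V` is
a union of fibres of `T`, whence `q ∑_{t ∈ V} χ t = ε (q ^ 2 - |V|) = 2 ε q ^ 2 / 3`; finally
`ε = -(-1) ^ e`.
-/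

open Finset

section FiberSums

variable {G H M : Type*} [AddCommGroup G] [Fintype G] [AddCommGroup H] [DecidableEq H]
  [AddCommMonoid M]

lemma AddMonoidHom.sum_comp_eq_card_ker_nsmul (f : G →+ H) (φ : H → M) :
    ∑ g, φ (f g) = #{g | f g = 0} • ∑ h ∈ univ.image f, φ h := by
  rw [sum_comp, smul_sum]
  refine sum_congr rfl fun h hh ↦ ?_
  obtain ⟨g, -, rfl⟩ := mem_image.mp hh
  rw [← map_zero f, AddMonoidHom.card_fiber_eq_of_mem_range f ⟨g, rfl⟩ ⟨0, rfl⟩]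

lemma AddMonoidHom.card_image_mul_card_ker (f : G →+ H) :
    #(univ.image f) * #{g | f g = 0} = Fintype.card G := by
  have h := f.sum_comp_eq_card_ker_nsmul (fun _ ↦ 1)
  simp only [sum_const, smul_eq_mul, mul_one] at h
  rw [mul_comm, ← h, card_univ]

end FiberSums

open Polynomial in
lemma card_filter_pow_eq_mul_le {F : Type*} [Field F] [Fintype F] [DecidableEq F]
    {m : ℕ} (hm : 2 ≤ m) (c : F) : #{z : F | z ^ m = c * z} ≤ m := by
  have hdeg : (X ^ m - C c * X : F[X]).natDegree = m := by
    rw [natDegree_sub_eq_left_of_natDegree_lt] <;> simp only [natDegree_X_pow]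
    exact (natDegree_C_mul_le c X).trans_lt (by rw [natDegree_X]; omega)
  have hne : (X ^ m - C c * X : F[X]) ≠ 0 := by
    intro h; rw [h, natDegree_zero] at hdeg; omega
  refine (card_le_degree_of_subset_roots fun z hz ↦ ?_).trans hdeg.le
  rw [mem_val, mem_filter] at hz
  simp [mem_roots hne, hz.2]

section ArtinSchreier

variable {F : Type*} [Field F] [Fintype F] (p : ℕ) [Fact p.Prime] [Algebra (ZMod p) F]

local notation "Tr" => Algebra.trace (ZMod p) F

lemma trace_pow_char_pow (n : ℕ) (x : F) : Tr (x ^ p ^ n) = Tr x := by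
  have h := Algebra.trace_eq_of_algEquiv (FiniteField.frobeniusAlgEquivOfAlgebraic (ZMod p) F ^ n) x
  rwa [AlgEquiv.coe_pow, FiniteField.coe_frobeniusAlgEquivOfAlgebraic_iterate, ZMod.card] at h

lemma mul_card_filter_trace_eq_zero : p * #{x : F | Tr x = 0} = Fintype.card F := by
  have hsurj : Function.Surjective Tr := LinearMap.surjective (Algebra.trace_ne_zero (ZMod p) F)
  have h := (Tr).toAddMonoidHom.card_image_mul_card_ker
  simp only [LinearMap.toAddMonoidHom_coe] at h
  rwa [image_univ_of_surjective hsurj, card_univ, ZMod.card] at h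

variable [DecidableEq F]

/-- `x ↦ x ^ p - x` is `p`-to-one onto the kernel of the trace, which contains `b`. -/
lemma sum_pow_char_sub_self_add {M : Type*} [AddCommMonoid M] {b : F} (hb : Tr b = 0)
    (φ : F → M) : ∑ x, φ (x ^ p - x + b) = p • ∑ t with Tr t = 0, φ t := by
  have : CharP F p := charP_of_injective_algebraMap' (ZMod p) p
  let P : F →+ F := (frobenius F p : F →+ F) - AddMonoidHom.id F
  have hP (x : F) : P x = x ^ p - x := rfl
  set V : Finset F := {t | Tr t = 0} with hV
  have himage_sub : univ.image P ⊆ V := by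
    intro t ht
    obtain ⟨x, -, rfl⟩ := mem_image.mp ht
    simpa [hV, hP, sub_eq_zero] using trace_pow_char_pow p 1 x
  have hker : #{x | P x = 0} ≤ p := by
    simpa [hP, sub_eq_zero] using card_filter_pow_eq_mul_le (Fact.out : p.Prime).two_le (1 : F)
  have hmul := P.card_image_mul_card_ker
  rw [← mul_card_filter_trace_eq_zero p, ← hV] at hmul
  have hle := card_le_card himage_sub
  have hpos : 0 < #V := card_pos.mpr ⟨0, by simp [hV]⟩
  have hker_eq : #{x | P x = 0} = p := by nlinarith
  rw [hker_eq, mul_comm] at hmul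
  have himage : univ.image P = V := eq_of_subset_of_card_le himage_sub
    (Nat.eq_of_mul_eq_mul_left (Fact.out : p.Prime).pos hmul).ge
  have hb_mem : b ∈ univ.image P := himage ▸ mem_filter.mpr ⟨mem_univ b, hb⟩
  obtain ⟨c, -, hc⟩ := mem_image.mp hb_mem
  calc ∑ x, φ (x ^ p - x + b) = ∑ x, φ (P (x + c)) := by simp [← hP, ← hc]
    _ = ∑ x, φ (P x) := Fintype.sum_equiv (Equiv.addRight c) _ _ fun _ ↦ rfl
    _ = p • ∑ t with Tr t = 0, φ t := by rw [P.sum_comp_eq_card_ker_nsmul, hker_eq, himage]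

end ArtinSchreier

lemma Nat.sq_div_two_of_odd {q : ℕ} (hq : Odd q) : q ^ 2 / 2 = (q - 1) * ((q + 1) / 2) := by
  obtain ⟨m, rfl⟩ := hq
  have h : (2 * m + 1) ^ 2 = 2 * (2 * m * (m + 1)) + 1 := by ring
  rw [h, show 2 * m + 1 - 1 = 2 * m by omega, show (2 * m + 1 + 1) / 2 = m + 1 by omega]
  omega

section SquareOrder

variable {F : Type*} [Field F] [Fintype F] {q : ℕ} (hF : Fintype.card F = q ^ 2)
include hF

lemma two_le_of_card_eq_sq : 2 ≤ q := by
  have h := hF ▸ Fintype.one_lt_card (α := F)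
  by_contra! h'
  interval_cases q <;> simp_all

variable (hF2 : ringChar F ≠ 2)
include hF2

lemma pow_card_div_two_eq (z : F) :
    z ^ (Fintype.card F / 2) = (z ^ (q - 1)) ^ ((q + 1) / 2) := by
  have hodd : Odd (q ^ 2) := Nat.odd_iff.mpr (hF ▸ FiniteField.odd_card_of_char_ne_two hF2)
  rw [hF, Nat.sq_div_two_of_odd ((Nat.odd_pow_iff two_ne_zero).mp hodd), pow_mul]

variable [DecidableEq F]

lemma quadraticChar_eq_one_of_pow_eq_self {k : F} (hk : k ≠ 0) (hkq : k ^ q = k) :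
    quadraticChar F k = 1 := by
  have hq := two_le_of_card_eq_sq hF
  have h1 : k ^ (q - 1) = 1 := (mul_eq_right₀ hk).mp ((pow_sub_one_mul (by omega) k).trans hkq)
  rw [quadraticChar_eq_pow_of_char_ne_two hF2 hk, pow_card_div_two_eq hF hF2, h1, one_pow,
    if_pos rfl]

lemma quadraticChar_eq_of_pow_eq_neg {z : F} (hz : z ≠ 0) (hzq : z ^ q = -z) :
    quadraticChar F z = (-1) ^ ((q + 1) / 2) := by
  have hq := two_le_of_card_eq_sq hF
  have h1 : z ^ (q - 1) = -1 :=
    mul_right_cancel₀ hz (by rw [pow_sub_one_mul (by omega), hzq, neg_one_mul])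
  rw [quadraticChar_eq_pow_of_char_ne_two hF2 hz, pow_card_div_two_eq hF hF2, h1]
  rcases Nat.even_or_odd ((q + 1) / 2) with h | h
  · rw [h.neg_one_pow, h.neg_one_pow, if_pos rfl]
  · rw [h.neg_one_pow, h.neg_one_pow, if_neg (Ring.neg_one_ne_one_of_char_ne_two hF2)]

end SquareOrder

section FrobeniusTrace

variable (F : Type*) [Field F] (p n : ℕ) [ExpChar F p]

/-- For `#F = (p ^ n) ^ 2` this is the trace of `F` over its subfield of order `p ^ n`. -/
def frobeniusTrace : F →+ F := AddMonoidHom.id F + (iterateFrobenius F p n : F →+ F)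

variable {F p n}

@[simp]
lemma frobeniusTrace_apply (z : F) : frobeniusTrace F p n z = z + z ^ p ^ n := rfl

variable [Fintype F] (hF : Fintype.card F = (p ^ n) ^ 2)
include hF

lemma frobeniusTrace_pow (z : F) :
    frobeniusTrace F p n z ^ p ^ n = frobeniusTrace F p n z := by
  rw [frobeniusTrace_apply, add_pow_expChar_pow, ← pow_mul, ← sq, ← hF, FiniteField.pow_card,
    add_comm]

variable [DecidableEq F]

lemma image_frobeniusTrace_subset :
    univ.image (frobeniusTrace F p n) ⊆ ({s | s ^ p ^ n = s} : Finset F) := fun s hs ↦ by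
  obtain ⟨z, -, rfl⟩ := mem_image.mp hs
  simpa using frobeniusTrace_pow hF z

lemma card_ker_frobeniusTrace : #{z | frobeniusTrace F p n z = 0} = p ^ n := by
  have hq := two_le_of_card_eq_sq hF
  have hker : #{z | frobeniusTrace F p n z = 0} ≤ p ^ n := by
    simpa [add_eq_zero_iff_eq_neg'] using card_filter_pow_eq_mul_le hq (-1 : F)
  have hK : #{s : F | s ^ p ^ n = s} ≤ p ^ n := by
    simpa using card_filter_pow_eq_mul_le hq (1 : F)
  have himage := (card_le_card (image_frobeniusTrace_subset hF)).trans hK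
  have hmul := (frobeniusTrace F p n).card_image_mul_card_ker
  rw [hF] at hmul
  nlinarith

lemma card_filter_pow_eq_self : #{s : F | s ^ p ^ n = s} = p ^ n := by
  have hq := two_le_of_card_eq_sq hF
  have hmul := (frobeniusTrace F p n).card_image_mul_card_ker
  rw [hF, card_ker_frobeniusTrace hF, sq] at hmul
  have himage := Nat.eq_of_mul_eq_mul_right (by omega) hmul
  have hK : #{s : F | s ^ p ^ n = s} ≤ p ^ n := by
    simpa using card_filter_pow_eq_mul_le hq (1 : F)
  exact le_antisymm hK (himage.symm.le.trans (card_le_card (image_frobeniusTrace_subset hF)))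

variable (hF2 : ringChar F ≠ 2)
include hF2

lemma sum_quadraticChar_ker_frobeniusTrace :
    ∑ z with frobeniusTrace F p n z = 0, quadraticChar F z =
      (-1) ^ ((p ^ n + 1) / 2) * (p ^ n - 1 : ℤ) := by
  have hq := two_le_of_card_eq_sq hF
  have h0 : (0 : F) ∈ ({z | frobeniusTrace F p n z = 0} : Finset F) :=
    mem_filter.mpr ⟨mem_univ _, map_zero _⟩
  have hχ (z) (hz : z ∈ ({z | frobeniusTrace F p n z = 0} : Finset F).erase 0) :
      quadraticChar F z = (-1) ^ ((p ^ n + 1) / 2) := by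
    refine quadraticChar_eq_of_pow_eq_neg hF hF2 (ne_of_mem_erase hz) ?_
    simpa [add_eq_zero_iff_eq_neg'] using (mem_filter.mp (mem_of_mem_erase hz)).2
  rw [← add_sum_erase _ _ h0, quadraticChar_zero, zero_add, sum_congr rfl hχ, sum_const,
    card_erase_of_mem h0, card_ker_frobeniusTrace hF, nsmul_eq_mul, Nat.cast_sub (by omega),
    Nat.cast_pow, Nat.cast_one, mul_comm]

lemma sum_quadraticChar_fiber_frobeniusTrace_mul {k : F} (hk : k ≠ 0) (hkq : k ^ p ^ n = k)
    (s : F) :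
    ∑ z with frobeniusTrace F p n z = k * s, quadraticChar F z =
      ∑ z with frobeniusTrace F p n z = s, quadraticChar F z := by
  simp only [sum_filter]
  refine (Fintype.sum_equiv (Equiv.mulLeft₀ k hk) _ _ fun z ↦ ?_).symm
  have hT : frobeniusTrace F p n (k * z) = k * frobeniusTrace F p n z := by
    simp [mul_pow, hkq, mul_add]
  simp only [Equiv.mulLeft₀_apply, hT, mul_right_inj' hk, map_mul,
    quadraticChar_eq_one_of_pow_eq_self hF hF2 hk hkq, one_mul]

-- Multiplication by the nonzero `t` with `t ^ p ^ n = t` permutes the nonzero fibres over them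
-- without changing `χ`, and all these fibres together cover `F`, where `∑ χ = 0`.
lemma sum_quadraticChar_fiber_frobeniusTrace_of_ne_zero {s : F} (hs : s ≠ 0)
    (hsq : s ^ p ^ n = s) :
    ∑ z with frobeniusTrace F p n z = s, quadraticChar F z = -(-1) ^ ((p ^ n + 1) / 2) := by
  set K : Finset F := {t | t ^ p ^ n = t}
  set D : F → ℤ := fun t ↦ ∑ z with frobeniusTrace F p n z = t, quadraticChar F z with hD
  have hq := two_le_of_card_eq_sq hF
  have hD_const (t) (ht : t ∈ K.erase 0) : D t = D s := by
    have htq : t ^ p ^ n = t := (mem_filter.mp (mem_of_mem_erase ht)).2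
    have h := sum_quadraticChar_fiber_frobeniusTrace_mul hF hF2
      (mul_ne_zero (ne_of_mem_erase ht) (inv_ne_zero hs)) (by rw [mul_pow, inv_pow, htq, hsq]) s
    rwa [inv_mul_cancel_right₀ hs] at h
  have hD_sum : ∑ t ∈ K, D t = 0 := by
    rw [sum_fiberwise_of_maps_to fun z _ ↦
      image_frobeniusTrace_subset hF (mem_image_of_mem _ (mem_univ z))]
    exact quadraticChar_sum_zero hF2
  have h0 : (0 : F) ∈ K := mem_filter.mpr ⟨mem_univ _, zero_pow (by omega)⟩
  rw [← add_sum_erase K D h0, sum_congr rfl hD_const, sum_const, card_erase_of_mem h0,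
    card_filter_pow_eq_self hF, nsmul_eq_mul, Nat.cast_sub (by omega), Nat.cast_pow, Nat.cast_one,
    show D 0 = _ from sum_quadraticChar_ker_frobeniusTrace hF hF2] at hD_sum
  have hq' : (p : ℤ) ^ n - 1 ≠ 0 := by
    have : (2 : ℤ) ≤ (p : ℤ) ^ n := by exact_mod_cast hq
    omega
  have key : ((p : ℤ) ^ n - 1) * (D s + (-1) ^ ((p ^ n + 1) / 2)) = 0 := by
    linear_combination hD_sum
  show D s = _
  linear_combination (mul_eq_zero.mp key).resolve_left hq'

-- With `ε = (-1) ^ ((q + 1) / 2)`, the value of `χ` on `ker T \ {0}`, the weight `q χ + ε`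
-- has vanishing sum over every fibre of `T` except its kernel.
lemma sum_fiber_frobeniusTrace_weight (s : F) :
    ∑ z with frobeniusTrace F p n z = s,
        ((p : ℤ) ^ n * quadraticChar F z + (-1) ^ ((p ^ n + 1) / 2)) =
      if s = 0 then (-1) ^ ((p ^ n + 1) / 2) * ((p : ℤ) ^ n) ^ 2 else 0 := by
  rw [sum_add_distrib, ← mul_sum, sum_const, nsmul_eq_mul]
  split_ifs with hs
  · rw [hs, sum_quadraticChar_ker_frobeniusTrace hF hF2, card_ker_frobeniusTrace hF]
    push_cast
    ring
  by_cases hmem : s ∈ univ.image (frobeniusTrace F p n)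
  · have hsq := (mem_filter.mp (image_frobeniusTrace_subset hF hmem)).2
    obtain ⟨z, -, hz⟩ := mem_image.mp hmem
    rw [sum_quadraticChar_fiber_frobeniusTrace_of_ne_zero hF hF2 hs hsq,
      AddMonoidHom.card_fiber_eq_of_mem_range _ ⟨z, hz⟩ ⟨0, map_zero _⟩,
      card_ker_frobeniusTrace hF]
    push_cast
    ring
  · have hempty : ({z | frobeniusTrace F p n z = s} : Finset F) = ∅ :=
      filter_eq_empty_iff.mpr fun z _ hz ↦ hmem (hz ▸ mem_image_of_mem _ (mem_univ z))
    rw [hempty, sum_empty, card_empty]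
    simp

lemma sum_comp_frobeniusTrace_mul_weight (g : F → ℤ) :
    ∑ z, g (frobeniusTrace F p n z) *
        ((p : ℤ) ^ n * quadraticChar F z + (-1) ^ ((p ^ n + 1) / 2)) =
      (-1) ^ ((p ^ n + 1) / 2) * ((p : ℤ) ^ n) ^ 2 * g 0 := by
  rw [← sum_fiberwise univ (frobeniusTrace F p n)]
  calc _ = ∑ s, g s * ∑ z with frobeniusTrace F p n z = s,
          ((p : ℤ) ^ n * quadraticChar F z + (-1) ^ ((p ^ n + 1) / 2)) := by
        refine sum_congr rfl fun s _ ↦ ?_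
        rw [mul_sum]
        exact sum_congr rfl fun z hz ↦ by rw [(mem_filter.mp hz).2]
    _ = _ := by
        simp only [sum_fiber_frobeniusTrace_weight hF hF2, mul_ite, mul_zero, sum_ite_eq',
          mem_univ, if_true]
        ring

end FrobeniusTrace

lemma card_sq_eq_eq_add_sum_quadraticChar {F : Type*} [Field F] [Fintype F] [DecidableEq F]
    (hF2 : ringChar F ≠ 2) (f : F → F) :
    (Nat.card {p : F × F // p.2 ^ 2 = f p.1} : ℤ) =
      Fintype.card F + ∑ x, quadraticChar F (f x) := by
  rw [Nat.card_congr (Equiv.subtypeProdEquivSigmaSubtype fun x y ↦ y ^ 2 = f x), Nat.card_sigma]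
  push_cast
  have h (x : F) : (Nat.card {y // y ^ 2 = f x} : ℤ) = quadraticChar F (f x) + 1 := by
    rw [← quadraticChar_card_sqrts hF2, Set.toFinset_card, Nat.card_eq_fintype_card]
    rfl
  rw [sum_congr rfl fun x _ ↦ h x, sum_add_distrib, sum_const, card_univ, nsmul_one, add_comm]

section TraceZero

variable {F : Type*} [Field F] [Fintype F] [DecidableEq F] {p n : ℕ} [Fact p.Prime]
  [Algebra (ZMod p) F]

local notation "Tr" => Algebra.trace (ZMod p) F

omit [DecidableEq F] in
lemma trace_frobeniusTrace_eq_zero_iff [ExpChar F p] (hp : p ≠ 2) (z : F) :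
    Tr (frobeniusTrace F p n z) = 0 ↔ Tr z = 0 := by
  have h2 : (2 : ZMod p) ≠ 0 := by
    rw [← Nat.cast_ofNat, Ne, ZMod.natCast_eq_zero_iff]
    exact fun h ↦ hp ((Nat.prime_dvd_prime_iff_eq Fact.out Nat.prime_two).mp h)
  rw [frobeniusTrace_apply, map_add, trace_pow_char_pow, ← two_mul, mul_eq_zero, or_iff_right h2]

variable (hF : Fintype.card F = (p ^ n) ^ 2) (hp : p ≠ 2)
include hF hp

lemma sum_quadraticChar_filter_trace_eq_zero :
    (p : ℤ) * ∑ t with Tr t = 0, quadraticChar F t =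
      (-1) ^ ((p ^ n + 1) / 2) * (p - 1) * p ^ n := by
  have : CharP F p := charP_of_injective_algebraMap' (ZMod p) p
  have hF2 : ringChar F ≠ 2 := by rwa [ringChar.eq F p]
  have hV : (p * #{t : F | Tr t = 0} : ℤ) = ((p : ℤ) ^ n) ^ 2 := by
    exact_mod_cast (mul_card_filter_trace_eq_zero p).trans hF
  have hweight := sum_comp_frobeniusTrace_mul_weight hF hF2 fun s ↦ if Tr s = 0 then 1 else 0
  simp only [trace_frobeniusTrace_eq_zero_iff hp, ite_mul, one_mul, zero_mul, ← sum_filter,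
    sum_add_distrib, ← mul_sum, sum_const, map_zero, if_true, nsmul_eq_mul, mul_one] at hweight
  refine mul_left_cancel₀ (pow_ne_zero n (Nat.cast_ne_zero.mpr (Fact.out : p.Prime).ne_zero)) ?_
  linear_combination (p : ℤ) * hweight - (-1) ^ ((p ^ n + 1) / 2) * hV

omit [DecidableEq F] in
lemma card_sq_eq_pow_char_sub_self_add {b : F} (hb : Tr b = 0) :
    (Nat.card {P : F × F // P.2 ^ 2 = P.1 ^ p - P.1 + b} : ℤ) =
      ((p : ℤ) ^ n) ^ 2 + (-1) ^ ((p ^ n + 1) / 2) * (p - 1) * p ^ n := by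
  classical
  have : CharP F p := charP_of_injective_algebraMap' (ZMod p) p
  have hF2 : ringChar F ≠ 2 := by rwa [ringChar.eq F p]
  rw [card_sq_eq_eq_add_sum_quadraticChar hF2 fun x ↦ x ^ p - x + b,
    sum_pow_char_sub_self_add p hb, nsmul_eq_mul, sum_quadraticChar_filter_trace_eq_zero hF hp, hF]
  push_cast
  ring

end TraceZero

lemma neg_one_pow_three_pow_add_one_div_two (e : ℕ) :
    (-1 : ℤ) ^ ((3 ^ e + 1) / 2) = -(-1) ^ e := by
  have h : (3 ^ e + 1) / 2 % 2 = (e + 1) % 2 := by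
    induction e with
    | zero => rfl
    | succ e ih =>
      have h3 : 3 ^ e % 2 = 1 := Nat.odd_iff.mp (Odd.pow (by decide))
      rw [pow_succ]
      omega
  rw [neg_one_pow_eq_pow_mod_two, h, ← neg_one_pow_eq_pow_mod_two, pow_succ, mul_neg_one]

theorem point_count_typeI_trace_zero_even_general
    (d : ℕ) (hd : Even d) (F : Type) [Field F] [Fintype F]
    [Algebra (ZMod 3) F] (hF : Fintype.card F = 3 ^ d) (b : F)
    (hb : Algebra.trace (ZMod 3) F b = 0) :
    (Nat.card {p : F × F // p.2 ^ 2 = p.1 ^ 3 - p.1 + b} : ℤ) + 1 =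
      3 ^ d + 1 - (-1) ^ (d / 2) * 2 * 3 ^ (d / 2) := by
  obtain ⟨e, rfl⟩ := hd
  have : Fact (Nat.Prime 3) := ⟨Nat.prime_three⟩
  have hq : Fintype.card F = (3 ^ e) ^ 2 := by rw [hF]; ring
  rw [card_sq_eq_pow_char_sub_self_add hq (by decide) hb, neg_one_pow_three_pow_add_one_div_two,
    show (e + e) / 2 = e by omega]
  push_cast
  ring

theorem point_count_typeI_trace_zero_even
    (d : ℕ) (hd : Even d) (hd0 : d ≠ 0) (F : Type) [Field F] [Fintype F]
    [Algebra (ZMod 3) F] (hF : Fintype.card F = 3 ^ d) (b : F)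
    (hb : Algebra.trace (ZMod 3) F b = 0) :
    (Nat.card {p : F × F // p.2 ^ 2 = p.1 ^ 3 - p.1 + b} : ℤ) + 1 =
      3 ^ d + 1 - (-1) ^ (d / 2) * 2 * 3 ^ (d / 2) :=
  point_count_typeI_trace_zero_even_general d hd F hF b hb
end

section
/- Let q = 3^d with d even and b ∈ F_q with Tr(b) ≠ 0. Then the elliptic curve E: y^2 = x^3 - x + b over F_q satisfies #E(F_q) = q + 1 + (-1)^(d/2)·3^(d/2). -/
/-!
Counting square roots with the quadratic character `χ` gives
`#E(F_q) = q + 1 + ∑ₓ χ(x³ - x + b)`. The map `x ↦ x³ - x` is `3`-to-`1` onto the kernel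
of the absolute trace, so the sum is `3 ∑_{Tr u = Tr b} χ(u)`. Let `K ⊂ F_q` be the subfield
with `3^(d/2)` elements; as `Tr = Tr_K ∘ Tr_{F_q/K}`, it suffices to sum `χ` over a fibre of
`Tr_{F_q/K}` above `v ≠ 0`. That fibre is `v/2 + δK` with `Tr_{F_q/K} δ = 0`, and since
`χ = χ_K ∘ N_{F_q/K}` the fibre sum becomes `∑ₖ χ_K(v²/4 - δ²k²) = χ_K(-1) = (-1)^(d/2)`,
because `δ²` is not a square in `K`. Finally exactly `3^(d/2 - 1)` elements of `K` have
trace `Tr b ≠ 0`.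
-/

open Finset

theorem card_sq_eq_card_add_sum_quadraticChar {F : Type*} [Field F] [Fintype F] [DecidableEq F]
    (hF : ringChar F ≠ 2) (f : F → F) :
    (Nat.card {p : F × F // p.2 ^ 2 = f p.1} : ℤ) =
      Fintype.card F + ∑ x, quadraticChar F (f x) := by
  have hfiber (x : F) : (Nat.card {y : F // y ^ 2 = f x} : ℤ) = quadraticChar F (f x) + 1 := by
    rw [← quadraticChar_card_sqrts hF, Set.toFinset_card, ← Nat.card_eq_fintype_card]
    rfl
  rw [Nat.card_congr (Equiv.subtypeProdEquivSigmaSubtype fun x y => y ^ 2 = f x), Nat.card_sigma]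
  push_cast
  simp only [hfiber, sum_add_distrib, sum_const, card_univ, nsmul_eq_mul, mul_one]
  ring

section FiberCount

variable {G H : Type*} [AddGroup G] [Fintype G] [AddGroup H] [DecidableEq H]

theorem AddMonoidHom.card_ker_mul_card_image (φ : G →+ H) :
    #{x | φ x = 0} * #(univ.image φ) = Fintype.card G := by
  have hfiber : ∀ c ∈ univ.image φ, #{x | φ x = c} = #{x | φ x = 0} := by
    rintro c hc
    obtain ⟨x, -, rfl⟩ := mem_image.mp hc
    exact AddMonoidHom.card_fiber_eq_of_mem_range φ ⟨x, rfl⟩ ⟨0, map_zero φ⟩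
  rw [← card_univ, card_eq_sum_card_image φ univ, sum_congr rfl hfiber, sum_const, smul_eq_mul,
    mul_comm]

theorem AddMonoidHom.card_fiber_mul_card_of_surjective [Fintype H] (φ : G →+ H)
    (hφ : Function.Surjective φ) (y : H) :
    #{x | φ x = y} * Fintype.card H = Fintype.card G := by
  rw [AddMonoidHom.card_fiber_eq_of_mem_range φ (hφ y) ⟨0, map_zero φ⟩,
    ← φ.card_ker_mul_card_image, image_univ_of_surjective hφ, card_univ]

end FiberCount

section QuadraticCharSums

variable {F : Type*} [Field F] [Fintype F] [DecidableEq F]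

theorem sum_comp_sq_eq_sum_quadraticChar_add_one_mul (hF : ringChar F ≠ 2) (f : F → ℤ) :
    ∑ t, f (t ^ 2) = ∑ w, (quadraticChar F w + 1) * f w := by
  rw [← sum_fiberwise univ (· ^ 2)]
  refine sum_congr rfl fun w _ => ?_
  rw [sum_congr rfl fun t ht => congrArg f (mem_filter.mp ht).2, sum_const,
    ← quadraticChar_card_sqrts hF, Set.toFinset_ofPred, nsmul_eq_mul]

theorem sum_quadraticChar_comp_eq_zero (hF : ringChar F ≠ 2) {e : F → F}
    (he : Function.Injective e) : ∑ x, quadraticChar F (e x) = 0 :=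
  ((Finite.injective_iff_bijective.mp he).sum_comp _).trans (quadraticChar_sum_zero hF)

theorem sum_quadraticChar_mul_sq_add (hF : ringChar F ≠ 2) {a c : F} (ha : a ≠ 0)
    (hc : c ≠ 0) : ∑ x, quadraticChar F (a * x ^ 2 + c) = -quadraticChar F a := by
  have hlin : ∑ w, quadraticChar F (a * w + c) = 0 :=
    sum_quadraticChar_comp_eq_zero hF fun x y h => by simpa [ha] using h
  have hrec : ∑ w, quadraticChar F (a + c * w⁻¹) = 0 :=
    sum_quadraticChar_comp_eq_zero hF fun x y h => by simpa [hc] using h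
  -- `0⁻¹ = 0` makes the `w = 0` term of `hrec` equal to `χ a`
  have hinv (w : F) : quadraticChar F (a + c * w⁻¹) =
      quadraticChar F (w * (a * w + c)) + if w = 0 then quadraticChar F a else 0 := by
    rcases eq_or_ne w 0 with rfl | hw
    · simp
    rw [if_neg hw, add_zero, show w * (a * w + c) = w ^ 2 * (a + c * w⁻¹) by field_simp,
      map_mul, quadraticChar_sq_one' hw, one_mul]
  simp_rw [sum_congr rfl fun w _ => hinv w, sum_add_distrib, sum_ite_eq', if_pos (mem_univ _)]
    at hrec
  rw [sum_comp_sq_eq_sum_quadraticChar_add_one_mul hF (fun w => quadraticChar F (a * w + c))]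
  simp_rw [add_one_mul, ← map_mul, sum_add_distrib, hlin]
  linarith

end QuadraticCharSums

theorem Nat.geom_sum_mul_div_two_of_odd {r : ℕ} (hr : Odd r) (n : ℕ) :
    (∑ i ∈ range n, r ^ i) * (r / 2) = r ^ n / 2 := by
  obtain ⟨s, rfl⟩ := hr
  have h := geom_sum_mul_add (2 * s) n
  rw [show (2 * s + 1) / 2 = s by omega, ← h, mul_left_comm, Nat.mul_add_div two_pos]
  simp

namespace FiniteField

theorem card_filter_pow_eq_self_le {F : Type*} [Field F] [Fintype F] [DecidableEq F]
    {n : ℕ} (hn : 1 < n) : #{x : F | x ^ n = x} ≤ n := by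
  have hne : (Polynomial.X ^ n - Polynomial.X : Polynomial F) ≠ 0 :=
    X_pow_card_sub_X_ne_zero F hn
  refine (Polynomial.card_le_degree_of_subset_roots fun x hx => ?_).trans
    (X_pow_card_sub_X_natDegree_eq F hn).le
  rw [Polynomial.mem_roots hne]
  simpa [sub_eq_zero] using (mem_filter.mp hx).2

section ArtinSchreier

variable {p : ℕ} [hp : Fact p.Prime] {F : Type*} [Field F] [Fintype F] [Algebra (ZMod p) F]

theorem trace_pow_char (x : F) :
    Algebra.trace (ZMod p) F (x ^ p) = Algebra.trace (ZMod p) F x := by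
  have hσ := Algebra.trace_eq_of_algEquiv (frobeniusAlgEquivOfAlgebraic (ZMod p) F) x
  rwa [coe_frobeniusAlgEquivOfAlgebraic, ZMod.card] at hσ

theorem card_filter_trace_eq_mul_char (t : ZMod p) :
    #{x : F | Algebra.trace (ZMod p) F x = t} * p = Fintype.card F := by
  have := AddMonoidHom.card_fiber_mul_card_of_surjective (Algebra.trace (ZMod p) F).toAddMonoidHom
    (Algebra.trace_surjective (ZMod p) F) t
  rwa [ZMod.card] at this

variable [DecidableEq F]

theorem card_filter_pow_sub_self_eq (c : F) :
    #{x : F | x ^ p - x = c} = if Algebra.trace (ZMod p) F c = 0 then p else 0 := by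
  have : CharP F p := charP_of_injective_algebraMap' (ZMod p) p
  let φ : F →+ F :=
    { toFun x := x ^ p - x
      map_zero' := by simp [hp.out.ne_zero]
      map_add' x y := by simp only [add_pow_char]; ring }
  have htrace (x : F) : Algebra.trace (ZMod p) F (φ x) = 0 := by
    simp [φ, trace_pow_char]
  have hsub : univ.image φ ⊆ ({c | Algebra.trace (ZMod p) F c = 0} : Finset F) := by
    simp [subset_iff, htrace]
  have hker : #{x | φ x = 0} ≤ p := by
    simpa [φ, sub_eq_zero] using card_filter_pow_eq_self_le (F := F) hp.out.one_lt
  have hprod := φ.card_ker_mul_card_image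
  have htr := card_filter_trace_eq_mul_char (F := F) (0 : ZMod p)
  have hpos := hp.out.pos
  have himage_le := card_le_card hsub
  -- `#ker φ ≤ p` and `#(image φ) ≤ #ker Tr`, while `#ker φ * #(image φ) = q = #ker Tr * p`
  have hcard : #(univ.image φ) = #{c | Algebra.trace (ZMod p) F c = 0} := by
    nlinarith
  have hker_eq : #{x | φ x = 0} = p := by
    have : 0 < #(univ.image φ) := by simp
    nlinarith
  split_ifs with hc
  · obtain ⟨x, -, hx⟩ := mem_image.mp (eq_of_subset_of_card_le hsub hcard.ge ▸
      mem_filter.mpr ⟨mem_univ c, hc⟩)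
    exact (AddMonoidHom.card_fiber_eq_of_mem_range φ ⟨x, hx⟩ ⟨0, map_zero φ⟩).trans
      hker_eq
  · rw [card_eq_zero, filter_eq_empty_iff]
    rintro x - rfl
    exact hc (htrace x)

theorem sum_pow_sub_self_add {M : Type*} [AddCommMonoid M] (g : F → M) (b : F) :
    ∑ x, g (x ^ p - x + b) =
      p • ∑ u with Algebra.trace (ZMod p) F u = Algebra.trace (ZMod p) F b, g u := by
  have hfiber (u : F) : #{x : F | x ^ p - x + b = u} =
      if Algebra.trace (ZMod p) F u = Algebra.trace (ZMod p) F b then p else 0 := by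
    simp_rw [← eq_sub_iff_add_eq, card_filter_pow_sub_self_eq, map_sub, sub_eq_zero]
  rw [← sum_fiberwise univ (fun x => x ^ p - x + b), sum_filter, smul_sum]
  refine sum_congr rfl fun u _ => ?_
  rw [sum_congr rfl fun x hx => congrArg g (mem_filter.mp hx).2, sum_const, hfiber]
  split_ifs <;> simp

end ArtinSchreier

theorem quadraticChar_norm {K L : Type*} [Field K] [Fintype K] [DecidableEq K] [Field L]
    [Fintype L] [DecidableEq L] [Algebra K L] (hK : ringChar K ≠ 2) (u : L) :
    quadraticChar K (Algebra.norm K u) = quadraticChar L u := by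
  have hL : ringChar L ≠ 2 := Algebra.ringChar_eq K L ▸ hK
  rcases eq_or_ne u 0 with rfl | hu
  · simp
  have hN : Algebra.norm K u ≠ 0 := Algebra.norm_ne_zero_iff.mpr hu
  -- Euler's criterion on both sides, and `(1 + r + ⋯ + r^(n-1)) * (r - 1)/2 = (r^n - 1)/2`
  rw [quadraticChar_eq_pow_of_char_ne_two hK hN, quadraticChar_eq_pow_of_char_ne_two hL hu]
  refine if_congr ?_ rfl rfl
  rw [← (algebraMap K L).injective.eq_iff, map_pow, map_one,
    algebraMap_norm_eq_pow_sum, ← pow_mul, ← Fintype.card_eq_nat_card,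
    Nat.geom_sum_mul_div_two_of_odd (Nat.odd_iff.mpr (odd_card_of_char_ne_two hK)),
    ← Module.card_eq_pow_finrank]

section QuadraticExtension

variable {K L : Type*} [Field K] [Fintype K] [Field L] [Fintype L] [Algebra K L]

local notation "σ" => frobeniusAlgEquivOfAlgebraic K L

theorem algebraMap_trace_eq_add_frobenius (h2 : Module.finrank K L = 2) (x : L) :
    algebraMap K L (Algebra.trace K L x) = x + σ x := by
  simp [algebraMap_trace_eq_sum_pow, h2, sum_range_succ]

theorem algebraMap_norm_eq_mul_frobenius (h2 : Module.finrank K L = 2) (x : L) :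
    algebraMap K L (Algebra.norm K x) = x * σ x := by
  simp [algebraMap_norm_eq_prod_pow, h2, prod_range_succ]

theorem exists_ne_zero_trace_eq_zero (h2 : Module.finrank K L = 2) :
    ∃ δ : L, δ ≠ 0 ∧ Algebra.trace K L δ = 0 := by
  by_contra! h
  have hinj : Function.Injective (Algebra.trace K L) :=
    (injective_iff_map_eq_zero _).mpr fun x hx => by_contra fun hx0 => h x hx0 hx
  have hcard := Fintype.card_le_of_injective _ hinj
  rw [Module.card_eq_pow_finrank (K := K) (V := L), h2] at hcard
  nlinarith [Fintype.one_lt_card (α := K)]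

theorem frobenius_eq_neg_of_trace_eq_zero (h2 : Module.finrank K L = 2) {x : L}
    (hx : Algebra.trace K L x = 0) : σ x = -x := by
  have := algebraMap_trace_eq_add_frobenius h2 x
  rw [hx, map_zero] at this
  linear_combination -this

variable [DecidableEq K]

theorem sum_trace_eq_eq_sum_algebraMap {M : Type*} [AddCommMonoid M]
    (h2 : Module.finrank K L = 2) (hK : ringChar K ≠ 2) {δ : L} (hδ : δ ≠ 0)
    (hδtr : Algebra.trace K L δ = 0) (v : K) (f : L → M) :
    ∑ u with Algebra.trace K L u = v, f u =
      ∑ k : K, f (algebraMap K L (v / 2) + δ * algebraMap K L k) := by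
  have h2K : (2 : K) ≠ 0 := Ring.two_ne_zero hK
  have h2L : (2 : L) ≠ 0 := Ring.two_ne_zero (Algebra.ringChar_eq K L ▸ hK)
  have hσδ := frobenius_eq_neg_of_trace_eq_zero h2 hδtr
  have hhalf : algebraMap K L v = 2 * algebraMap K L (v / 2) := by
    rw [← map_ofNat (algebraMap K L) 2, ← map_mul, mul_div_cancel₀ _ h2K]
  set a := algebraMap K L (v / 2)
  have hσa : σ a = a := AlgEquiv.commutes _ _
  have hleft : ∀ u ∈ ({u | Algebra.trace K L u = v} : Finset L),
      a + δ * algebraMap K L (Algebra.trace K L ((u - a) / δ) / 2) = u := by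
    intro u hu
    have hσu : σ u = 2 * a - u := by
      rw [← hhalf, ← (mem_filter.mp hu).2, algebraMap_trace_eq_add_frobenius h2]
      ring
    rw [map_div₀, algebraMap_trace_eq_add_frobenius h2, map_div₀, map_sub, hσa, hσu, hσδ,
      map_ofNat]
    field_simp
    ring
  refine sum_nbij' (fun u => Algebra.trace K L ((u - a) / δ) / 2)
    (fun k => a + δ * algebraMap K L k) (by simp) ?_ hleft ?_ fun u hu => by rw [hleft u hu]
  · intro k _
    rw [mem_filter, ← (algebraMap K L).injective.eq_iff, algebraMap_trace_eq_add_frobenius h2]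
    simp only [map_add, map_mul, AlgEquiv.commutes, hσδ, hσa, hhalf]
    exact ⟨mem_univ _, by ring⟩
  · intro k _
    rw [add_sub_cancel_left, mul_div_cancel_left₀ _ hδ, Algebra.trace_algebraMap, h2,
      nsmul_eq_mul, Nat.cast_ofNat, mul_div_cancel_left₀ _ h2K]

theorem sum_quadraticChar_trace_eq [DecidableEq L] (h2 : Module.finrank K L = 2)
    (hK : ringChar K ≠ 2) {v : K} (hv : v ≠ 0) :
    ∑ u with Algebra.trace K L u = v, quadraticChar L u = quadraticChar K (-1) := by
  obtain ⟨δ, hδ, hδtr⟩ := exists_ne_zero_trace_eq_zero h2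
  have hσδ := frobenius_eq_neg_of_trace_eq_zero h2 hδtr
  set E := Algebra.norm K δ
  have hE : algebraMap K L E = -δ ^ 2 := by
    rw [algebraMap_norm_eq_mul_frobenius h2, hσδ]
    ring
  have hnorm (k : K) : Algebra.norm K (algebraMap K L (v / 2) + δ * algebraMap K L k) =
      E * k ^ 2 + (v / 2) ^ 2 := by
    apply (algebraMap K L).injective
    simp only [algebraMap_norm_eq_mul_frobenius h2, map_add, map_mul, map_pow, AlgEquiv.commutes,
      hσδ, hE]
    ring
  -- `δ ∉ K` while `δ² ∈ K`, so `δ²` is not a square in `K`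
  have hnonsq : ¬IsSquare (-E) := by
    rintro ⟨t, ht⟩
    have hsq : (δ - algebraMap K L t) * (δ + algebraMap K L t) = 0 := by
      have := congrArg (algebraMap K L) ht
      rw [map_neg, hE, map_mul] at this
      linear_combination this
    have hσ : σ δ = δ := by
      rcases mul_eq_zero.mp hsq with h | h
      · rw [sub_eq_zero.mp h, AlgEquiv.commutes]
      · rw [eq_neg_of_add_eq_zero_left h, map_neg, AlgEquiv.commutes]
    have h2δ : 2 * δ = 0 := by linear_combination hσ.symm.trans hσδ
    exact hδ ((mul_eq_zero.mp h2δ).resolve_left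
      (Ring.two_ne_zero (Algebra.ringChar_eq K L ▸ hK)))
  have hE0 : E ≠ 0 := fun h => hnonsq ⟨0, by rw [h, neg_zero, mul_zero]⟩
  rw [sum_trace_eq_eq_sum_algebraMap h2 hK hδ hδtr v]
  rw [sum_congr rfl fun k _ => (quadraticChar_norm hK _).symm.trans (congrArg _ (hnorm k)),
    sum_quadraticChar_mul_sq_add hK hE0 (pow_ne_zero 2 (div_ne_zero hv (Ring.two_ne_zero hK))),
    show E = -1 * -E by ring, map_mul, quadraticChar_neg_one_iff_not_isSquare.mpr hnonsq]
  ring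

end QuadraticExtension

theorem sum_quadraticChar_trace_eq_of_finrank_eq_two {k K L : Type*} [Field k] [DecidableEq k]
    [Field K] [Fintype K] [DecidableEq K] [Field L] [Fintype L] [DecidableEq L] [Algebra k K]
    [Algebra K L] [Algebra k L] [IsScalarTower k K L] (h2 : Module.finrank K L = 2)
    (hK : ringChar K ≠ 2) {t : k} (ht : t ≠ 0) :
    ∑ u with Algebra.trace k L u = t, quadraticChar L u =
      #{v : K | Algebra.trace k K v = t} * quadraticChar K (-1) := by
  rw [← sum_fiberwise_of_maps_to (t := {v : K | Algebra.trace k K v = t})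
    (g := Algebra.trace K L) (by simp [Algebra.trace_trace]), ← nsmul_eq_mul, ← sum_const]
  refine sum_congr rfl fun v hv => ?_
  replace hv : Algebra.trace k K v = t := (mem_filter.mp hv).2
  have hv0 : v ≠ 0 := by
    rintro rfl
    exact ht (hv.symm.trans (map_zero _))
  rw [← sum_quadraticChar_trace_eq h2 hK hv0, filter_filter]
  refine sum_congr (filter_congr fun u _ => and_iff_right_of_imp ?_) fun _ _ => rfl
  rintro rfl
  exact (Algebra.trace_trace u).symm.trans hv

theorem sum_quadraticChar_trace_eq_of_card_eq_pow_two_mul {p : ℕ} [Fact p.Prime] (hp : p ≠ 2)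
    {F : Type*} [Field F] [Fintype F] [DecidableEq F] [Algebra (ZMod p) F] {m : ℕ}
    (hF : Fintype.card F = p ^ (2 * m)) {t : ZMod p} (ht : t ≠ 0) :
    p * ∑ u with Algebra.trace (ZMod p) F u = t, quadraticChar F u =
      p ^ m * ZMod.χ₄ (p ^ m : ℕ) := by
  classical
  have hp1 := (Fact.out : p.Prime).one_lt
  have hm : m ≠ 0 := by
    rintro rfl
    exact Fintype.one_lt_card.ne' (by simpa using hF)
  let K := GaloisField p m
  let : Fintype K := Fintype.ofFinite K
  have hKcard : Fintype.card K = p ^ m := by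
    rw [Fintype.card_eq_nat_card, GaloisField.card p m hm]
  have hFrank : Module.finrank (ZMod p) F = 2 * m :=
    Nat.pow_right_injective hp1 ((pow_finrank_eq_card p F).trans hF)
  obtain ⟨φ⟩ := nonempty_algHom_of_finrank_dvd (K := K) (L := F) (F := ZMod p)
    (by rw [GaloisField.finrank p hm, hFrank]; exact dvd_mul_left m 2)
  algebraize [φ.toRingHom]
  have h2 : Module.finrank K F = 2 := by
    have := Module.finrank_mul_finrank (ZMod p) K F
    rw [GaloisField.finrank p hm, hFrank] at this
    exact Nat.eq_of_mul_eq_mul_left (Nat.pos_of_ne_zero hm) (by linarith)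
  have hK : ringChar K ≠ 2 := by rwa [ringChar.eq K p]
  have hfiber := card_filter_trace_eq_mul_char (F := K) t
  rw [hKcard] at hfiber
  rw [sum_quadraticChar_trace_eq_of_finrank_eq_two h2 hK ht, quadraticChar_neg_one hK, hKcard,
    ← mul_assoc]
  congr 1
  exact_mod_cast (mul_comm _ _).trans hfiber

end FiniteField

theorem point_count_typeI_trace_nonzero_even_general
    (d : ℕ) (hd : Even d) (F : Type) [Field F] [Fintype F]
    [Algebra (ZMod 3) F] (hF : Fintype.card F = 3 ^ d) (b : F)
    (hb : Algebra.trace (ZMod 3) F b ≠ 0) :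
    (Nat.card {p : F × F // p.2 ^ 2 = p.1 ^ 3 - p.1 + b} : ℤ) + 1 =
      3 ^ d + 1 + (-1) ^ (d / 2) * 3 ^ (d / 2) := by
  classical
  have : Fact (Nat.Prime 3) := ⟨Nat.prime_three⟩
  obtain ⟨m, rfl⟩ := hd
  have hF3 : ringChar F ≠ 2 := by
    rw [← Algebra.ringChar_eq (ZMod 3) F, ZMod.ringChar_zmod_n]
    decide
  have hχ₄ : (ZMod.χ₄ (3 ^ m : ℕ) : ℤ) = (-1) ^ m := by
    rw [Nat.cast_pow, map_pow]
    rfl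
  rw [card_sq_eq_card_add_sum_quadraticChar hF3 fun x => x ^ 3 - x + b,
    FiniteField.sum_pow_sub_self_add, nsmul_eq_mul,
    FiniteField.sum_quadraticChar_trace_eq_of_card_eq_pow_two_mul (by decide)
      (by rw [hF, two_mul]) hb,
    hF, hχ₄, ← two_mul, Nat.mul_div_cancel_left m two_pos]
  push_cast
  ring

theorem point_count_typeI_trace_nonzero_even
    (d : ℕ) (hd : Even d) (hd0 : d ≠ 0) (F : Type) [Field F] [Fintype F]
    [Algebra (ZMod 3) F] (hF : Fintype.card F = 3 ^ d) (b : F)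
    (hb : Algebra.trace (ZMod 3) F b ≠ 0) :
    (Nat.card {p : F × F // p.2 ^ 2 = p.1 ^ 3 - p.1 + b} : ℤ) + 1 =
      3 ^ d + 1 + (-1) ^ (d / 2) * 3 ^ (d / 2) :=
  point_count_typeI_trace_nonzero_even_general d hd F hF b hb
end

section
/- Let q = 3^d and c ∈ F_q^× a non-square. Then the elliptic curve E: y^2 = x^3 - c·x over F_q satisfies #E(F_q) = q + 1. -/
theorem point_count_typeIII
    (d : ℕ) (F : Type) [Field F] [Fintype F]
    (hF : Fintype.card F = 3 ^ d) (c : F) (hc0 : c ≠ 0) (hc : ¬ IsSquare c) :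
    Nat.card {p : F × F // p.2 ^ 2 = p.1 ^ 3 - c * p.1} + 1 = 3 ^ d + 1 := by
  have h3 : (3 : F) = 0 := by
    have hcast : ((Fintype.card F : ℕ) : F) = 0 := FiniteField.cast_card_eq_zero F
    rw [hF] at hcast
    push_cast at hcast
    exact (pow_eq_zero_iff'.mp hcast).1
  have hinj : Function.Injective (fun x : F => x ^ 3 - c * x) := by
    intro a b h
    simp only at h
    have hcube : (a - b) ^ 3 - c * (a - b) = 0 := by
      linear_combination h + (a * b ^ 2 - a ^ 2 * b) * h3
    have : (a - b) * ((a - b) ^ 2 - c) = 0 := by linear_combination hcube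
    rcases mul_eq_zero.mp this with h1 | h2
    · exact sub_eq_zero.mp h1
    · exfalso
      apply hc
      exact ⟨a - b, by linear_combination -h2⟩
  have hbij := Finite.injective_iff_bijective.mp hinj
  let g : F ≃ F := Equiv.ofBijective _ hbij
  have hg : ∀ x, g x = x ^ 3 - c * x := fun x => rfl
  let e : {p : F × F // p.2 ^ 2 = p.1 ^ 3 - c * p.1} ≃ F :=
    { toFun := fun p => p.1.2
      invFun := fun y => ⟨(g.symm (y ^ 2), y), by
        have := g.apply_symm_apply (y ^ 2)
        rw [hg] at this
        simpa using this.symm⟩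
      left_inv := by
        rintro ⟨⟨x, y⟩, hp⟩
        have : g.symm (y ^ 2) = x := by
          apply g.injective
          rw [g.apply_symm_apply, hg, hp]
        simp [this]
      right_inv := fun y => rfl }
  rw [Nat.card_congr e, Nat.card_eq_fintype_card, hF]
end

section
/- Let q = 3^d with d odd, and let b, b' ∈ F_q. The curves E_b: y^2 = x^3 - x + b and E_{b'}: y^2 = x^3 - x + b' are isomorphic over F_q if and only if Tr(b) = Tr(b'), where Tr is the trace to F_3. -/
/-!
A change of variables between two curves `y² = x³ - x + b` in characteristic 3 must have
`s = t = 0` and `u⁴ = 1`, and it sends `b` to `u⁻⁶ (b + r³ - r)`. When `d` is odd,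
`q ≡ 3 mod 4`, so `-1` is not a square in `F` and `u² = 1`; hence the curves are isomorphic iff
`b' - b = r³ - r` for some `r`. The trace is Frobenius-invariant, so it kills `r³ - r`.
Conversely (Artin–Schreier) the image of `r ↦ r³ - r` lies in the kernel of the trace, and both
have `q / 3` elements: the kernel of `r ↦ r³ - r` consists of roots of `X³ - X`, and the trace
is surjective.
-/

/-- The Weierstrass curve `y² = x³ - x + b`. -/
def Eb (F : Type) [Field F] (b : F) : WeierstrassCurve F :=
  { a₁ := 0, a₂ := 0, a₃ := 0, a₄ := -1, a₆ := b }

open Polynomial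

theorem Nat.three_pow_mod_four_of_odd {d : ℕ} (hd : Odd d) : 3 ^ d % 4 = 3 := by
  obtain ⟨k, rfl⟩ := hd
  rw [pow_succ, pow_mul, Nat.mul_mod, Nat.pow_mod]
  norm_num

theorem FiniteField.sq_eq_one_of_pow_four_eq_one {F : Type*} [Field F] [Fintype F]
    (hF : Fintype.card F % 4 = 3) {u : F} (hu : u ^ 4 = 1) : u ^ 2 = 1 := by
  have : (u ^ 2 - 1) * (u ^ 2 + 1) = 0 := by linear_combination hu
  rcases mul_eq_zero.1 this with h | h
  · exact sub_eq_zero.1 h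
  · exact absurd hF (FiniteField.isSquare_neg_one_iff.1 ⟨u, by linear_combination -h⟩)

section ArtinSchreier

variable (K : Type*) {L : Type*} [Field K] [Fintype K] [Field L] [Finite L] [Algebra K L]

theorem Algebra.trace_pow_card (x : L) :
    Algebra.trace K L (x ^ Fintype.card K) = Algebra.trace K L x :=
  Algebra.trace_eq_of_algEquiv (FiniteField.frobeniusAlgEquivOfAlgebraic K L) x

theorem Algebra.trace_pow_card_sub_self (x : L) :
    Algebra.trace K L (x ^ Fintype.card K - x) = 0 := by
  rw [map_sub, Algebra.trace_pow_card, sub_self]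

namespace FiniteField

variable (L) in
def artinSchreier : L →+ L :=
  (frobeniusAlgHom K L).toAddMonoidHom - AddMonoidHom.id L

theorem card_ker_artinSchreier_le : Nat.card (artinSchreier K L).ker ≤ Fintype.card K := by
  classical
  have hq : 1 < Fintype.card K := Fintype.one_lt_card
  have := Fintype.ofFinite L
  rw [← SetLike.coe_sort_coe, Nat.card_eq_card_toFinset]
  calc _ ≤ (X ^ Fintype.card K - X : L[X]).natDegree := by
        refine card_le_degree_of_subset_roots fun x hx ↦ ?_
        rw [Finset.mem_val, Set.mem_toFinset, SetLike.mem_coe, AddMonoidHom.mem_ker] at hx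
        rw [mem_roots (X_pow_card_sub_X_ne_zero L hq)]
        simpa [artinSchreier, sub_eq_zero] using hx
    _ = Fintype.card K := X_pow_card_sub_X_natDegree_eq L hq

theorem range_artinSchreier_eq_ker_trace :
    (artinSchreier K L).range = (Algebra.trace K L).toAddMonoidHom.ker := by
  refine AddSubgroup.eq_of_le_of_card_ge ?_ ?_
  · rintro _ ⟨x, rfl⟩
    exact Algebra.trace_pow_card_sub_self K x
  · have hφ := AddSubgroup.card_eq_card_quotient_mul_card_addSubgroup (artinSchreier K L).ker
    rw [Nat.card_congr (QuotientAddGroup.quotientKerEquivRange _).toEquiv] at hφ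
    have hψ := AddSubgroup.card_eq_card_quotient_mul_card_addSubgroup
      (Algebra.trace K L).toAddMonoidHom.ker
    rw [Nat.card_congr (QuotientAddGroup.quotientKerEquivOfSurjective _
      (Algebra.trace_surjective K L)).toEquiv, Nat.card_eq_fintype_card (α := K)] at hψ
    refine Nat.le_of_mul_le_mul_left ?_ (Fintype.card_pos (α := K))
    calc _ = Nat.card (artinSchreier K L).range * Nat.card (artinSchreier K L).ker := by
          rw [← hψ, hφ]
      _ ≤ _ := by rw [mul_comm]; exact Nat.mul_le_mul_right _ (card_ker_artinSchreier_le K)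

theorem exists_pow_card_sub_self_eq_of_trace_eq_zero {c : L} (hc : Algebra.trace K L c = 0) :
    ∃ x : L, x ^ Fintype.card K - x = c :=
  (range_artinSchreier_eq_ker_trace K).ge hc

end FiniteField

end ArtinSchreier

open WeierstrassCurve in
theorem variableChange_smul_Eb_eq_Eb_iff {F : Type} [Field F] [CharP F 3]
    (C : VariableChange F) (b b' : F) :
    C • Eb F b = Eb F b' ↔
      C.s = 0 ∧ C.t = 0 ∧ (C.u : F) ^ 4 = 1 ∧ (C.u : F) ^ 6 * b' = b + C.r ^ 3 - C.r := by
  have h3 : (3 : F) = 0 := by exact_mod_cast CharP.cast_eq_zero F 3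
  simp only [WeierstrassCurve.ext_iff, variableChange_a₁, variableChange_a₂,
    variableChange_a₃, variableChange_a₄, variableChange_a₆, Eb, ← Units.val_pow_eq_pow_val,
    inv_pow, Units.inv_mul_eq_iff_eq_mul, mul_zero, add_zero, zero_add, sub_zero]
  simp only [Units.val_pow_eq_pow_val]
  constructor
  · rintro ⟨h₁, -, h₃, h₄, h₆⟩
    have hs : C.s = 0 := by linear_combination C.s * h3 - h₁
    have ht : C.t = 0 := by linear_combination C.t * h3 - h₃
    exact ⟨hs, ht, by linear_combination h₄ - C.r ^ 2 * h3 + 2 * C.t * hs,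
      by linear_combination -h₆ - C.t * ht⟩
  · rintro ⟨hs, ht, hu, hb⟩
    rw [hs, ht]
    exact ⟨by ring, by linear_combination C.r * h3, by ring,
      by linear_combination C.r ^ 2 * h3 + hu, by linear_combination -hb⟩

theorem typeI_isomorphic_iff_trace_eq_odd
    (d : ℕ) (hd : Odd d) (F : Type) [Field F] [Fintype F] [Algebra (ZMod 3) F]
    (hF : Fintype.card F = 3 ^ d) (b b' : F) :
    (∃ C : WeierstrassCurve.VariableChange F, C • Eb F b = Eb F b') ↔
      Algebra.trace (ZMod 3) F b = Algebra.trace (ZMod 3) F b' := by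
  have : CharP F 3 := charP_of_injective_algebraMap (algebraMap (ZMod 3) F).injective 3
  have hq : Fintype.card F % 4 = 3 := hF ▸ Nat.three_pow_mod_four_of_odd hd
  have htrace (r : F) : Algebra.trace (ZMod 3) F (r ^ 3 - r) = 0 := by
    simpa using Algebra.trace_pow_card_sub_self (ZMod 3) r
  simp_rw [variableChange_smul_Eb_eq_Eb_iff]
  constructor
  · rintro ⟨C, -, -, hu4, hb'⟩
    have hu6 : (C.u : F) ^ 6 = 1 := by
      rw [show 6 = 2 * 3 by rfl, pow_mul, FiniteField.sq_eq_one_of_pow_four_eq_one hq hu4, one_pow]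
    rw [hu6, one_mul, add_sub_assoc] at hb'
    rw [hb', map_add, htrace, add_zero]
  · intro h
    obtain ⟨r, hr⟩ := FiniteField.exists_pow_card_sub_self_eq_of_trace_eq_zero (ZMod 3)
      (c := b' - b) (by rw [map_sub, h, sub_self])
    rw [ZMod.card] at hr
    refine ⟨⟨1, r, 0, 0⟩, rfl, rfl, one_pow 4, ?_⟩
    simp only [Units.val_one, one_pow, one_mul]
    linear_combination -hr
end

section
/- Let q = 3^d with d even and E: y^2 = x^3 + a_4 x + a_6 a supersingular elliptic curve over F_q (so a_4 ≠ 0). If -a_4 is not a square in F_q, then #E(F_q) = q + 1. -/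
theorem point_count_supersingular_nonsquare_even
    (d : ℕ) (hd : Even d) (F : Type) [Field F] [Fintype F]
    (hF : Fintype.card F = 3 ^ d) (a₄ a₆ : F) (ha₄ : a₄ ≠ 0)
    (hns : ¬ IsSquare (-a₄)) :
    Nat.card {p : F × F // p.2 ^ 2 = p.1 ^ 3 + a₄ * p.1 + a₆} + 1 = 3 ^ d + 1 := by
  classical
  -- characteristic is 3
  have hchar : ringChar F = 3 := by
    obtain ⟨n, hp, hcard⟩ := FiniteField.card F (ringChar F)
    have h3 : (3 : ℕ).Prime := by norm_num
    have hdvd : ringChar F ∣ 3 := by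
      have : ringChar F ∣ 3 ^ d := by
        rw [← hF, hcard]
        exact dvd_pow_self _ (Nat.pos_of_ne_zero (by exact_mod_cast n.ne_zero)).ne'
      exact hp.dvd_of_dvd_pow this
    exact ((Nat.prime_dvd_prime_iff_eq hp h3).mp hdvd)
  haveI : CharP F 3 := hchar ▸ ringChar.charP F
  haveI : Fact (Nat.Prime 3) := ⟨by norm_num⟩
  have hne2 : ringChar F ≠ 2 := by rw [hchar]; norm_num
  set g : F → F := fun x => x ^ 3 + a₄ * x + a₆ with hg
  -- g is bijective
  have hginj : Function.Injective g := by
    intro x y hxy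
    by_contra hne
    have h1 : (x - y) ^ 3 + a₄ * (x - y) = 0 := by
      have := sub_pow_char x y (R := F) (p := 3)
      simp only [hg] at hxy
      rw [this]
      linear_combination hxy
    have h2 : (x - y) * ((x - y) ^ 2 + a₄) = 0 := by ring_nf; linear_combination h1
    have hxy0 : x - y ≠ 0 := sub_ne_zero.mpr hne
    have h3 : (x - y) ^ 2 = -a₄ := by
      rcases mul_eq_zero.mp h2 with h | h
      · exact absurd h hxy0
      · linear_combination h
    exact hns ⟨x - y, by rw [← h3]; ring⟩
  have hgbij : Function.Bijective g := (Finite.injective_iff_bijective).mp hginj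
  -- equivalence with a sigma type
  have e : {p : F × F // p.2 ^ 2 = p.1 ^ 3 + a₄ * p.1 + a₆} ≃ Σ x : F, {y : F // y ^ 2 = g x} :=
    { toFun := fun p => ⟨p.1.1, p.1.2, p.2⟩
      invFun := fun s => ⟨(s.1, s.2.1), s.2.2⟩
      left_inv := fun p => rfl
      right_inv := fun s => rfl }
  have hcardsum : Nat.card {p : F × F // p.2 ^ 2 = p.1 ^ 3 + a₄ * p.1 + a₆}
      = ∑ x : F, Fintype.card {y : F // y ^ 2 = g x} := by
    rw [Nat.card_congr e, Nat.card_eq_fintype_card, Fintype.card_sigma]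
  -- count square roots via quadratic character
  have hsq : ∀ c : F, (Fintype.card {y : F // y ^ 2 = c} : ℤ) = quadraticChar F c + 1 := by
    intro c
    have := quadraticChar_card_sqrts hne2 c
    rw [← this, Set.toFinset_card]
    congr 1
  have hsum : (∑ x : F, (Fintype.card {y : F // y ^ 2 = g x} : ℤ)) = (3 : ℤ) ^ d := by
    have h1 : (∑ x : F, (Fintype.card {y : F // y ^ 2 = g x} : ℤ))
        = ∑ x : F, ((quadraticChar F (g x) : ℤ) + 1) := by
      exact Finset.sum_congr rfl fun x _ => hsq (g x)
    rw [h1, Finset.sum_add_distrib]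
    have h2 : (∑ x : F, (quadraticChar F (g x) : ℤ)) = ∑ u : F, (quadraticChar F u : ℤ) :=
      Function.Bijective.sum_comp hgbij _
    have h3 : (∑ u : F, (quadraticChar F u : ℤ)) = 0 :=
      quadraticChar_sum_zero hne2
    rw [h2, h3]
    simp [hF]
  have : (Nat.card {p : F × F // p.2 ^ 2 = p.1 ^ 3 + a₄ * p.1 + a₆} : ℤ) = 3 ^ d := by
    rw [hcardsum]
    push_cast
    exact hsum
  have hfin : Nat.card {p : F × F // p.2 ^ 2 = p.1 ^ 3 + a₄ * p.1 + a₆} = 3 ^ d := by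
    exact_mod_cast this
  omega
end
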